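/- arXiv:0805.0209 — 2 statements merged into one kernel-verified Lean document; each statement's English description precedes it below -/
import Mathlib

section
/- Let J be a bicompact closed ideal of a Banach algebra A (L_u R_v is compact on J for all u, v ∈ J). Then for any a, b in the closed linear span of JA, the operator L_a R_b on A is compact. -/
/-! The map `(a, b) ↦ L_a R_b` is a continuous bilinear map into the operators on `A`, and the
compact operators form a closed subspace there (this is where completeness of `A` enters). So it
suffices to treat generators `a = j c`, `b = k d` of the span, and
`L_{jc} R_{kd} = R_d ∘ L_j R_k ∘ L_c` is compact because `L_j R_k` is. -/

section Defs

variable (B : Type*) [NonUnitalNormedRing B] [NormedSpace ℂ B]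
  [SMulCommClass ℂ B B] [IsScalarTower ℂ B B]

/-- A closed two-sided ideal of a (not necessarily unital) complex normed algebra. -/
structure ClosedIdeal where
  carrier : Submodule ℂ B
  isClosed : IsClosed (carrier : Set B)
  mul_mem_left : ∀ (x : B) ⦃a : B⦄, a ∈ carrier → x * a ∈ carrier
  mul_mem_right : ∀ (x : B) ⦃a : B⦄, a ∈ carrier → a * x ∈ carrier

variable {B}

/-- The two-sided multiplication map `W_b : x ↦ b x b` as a linear map. -/
def Wop (b : B) : B →ₗ[ℂ] B where
  toFun x := b * x * b
  map_add' x y := by simp [mul_add, add_mul]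
  map_smul' c x := by simp [mul_smul_comm, smul_mul_assoc]

/-- An element `b` of a Banach algebra is *compact* if `x ↦ b x b` is a compact operator. -/
def IsCompactElement' (b : B) : Prop := IsCompactOperator (Wop b)

end Defs

section Instances

variable {B : Type*} [NonUnitalNormedRing B] [NormedSpace ℂ B]
  [SMulCommClass ℂ B B] [IsScalarTower ℂ B B]

namespace ClosedIdeal

instance (J : ClosedIdeal B) : Mul J.carrier :=
  ⟨fun x y => ⟨(x : B) * y, J.mul_mem_left x y.2⟩⟩

@[simp] theorem coe_mul (J : ClosedIdeal B) (x y : J.carrier) :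
    ((x * y : J.carrier) : B) = (x : B) * y := rfl

instance (J : ClosedIdeal B) : NonUnitalNormedRing J.carrier :=
  { (inferInstance : NormedAddCommGroup J.carrier) with
    mul := (· * ·)
    mul_assoc := fun x y z => Subtype.ext (mul_assoc (x : B) y z)
    left_distrib := fun x y z => Subtype.ext (mul_add (x : B) y z)
    right_distrib := fun x y z => Subtype.ext (add_mul (x : B) y z)
    zero_mul := fun x => Subtype.ext (zero_mul (x : B))
    mul_zero := fun x => Subtype.ext (mul_zero (x : B))
    norm_mul_le := fun x y => norm_mul_le (x : B) y }

instance (J : ClosedIdeal B) : SMulCommClass ℂ J.carrier J.carrier :=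
  ⟨fun c x y => Subtype.ext (mul_smul_comm c (x : B) y).symm⟩

instance (J : ClosedIdeal B) : IsScalarTower ℂ J.carrier J.carrier :=
  ⟨fun c x y => Subtype.ext (smul_mul_assoc c (x : B) y)⟩

instance (J : ClosedIdeal B) [CompleteSpace B] : CompleteSpace J.carrier :=
  J.isClosed.isComplete.completeSpace_coe

end ClosedIdeal

end Instances

section QuotInstances

variable {B : Type*} [NonUnitalNormedRing B] [NormedSpace ℂ B]
  [SMulCommClass ℂ B B] [IsScalarTower ℂ B B] (J : ClosedIdeal B)

instance : Mul (B ⧸ J.carrier) :=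
  ⟨Quotient.map₂ (· * ·) (by
    intro a a' ha b b' hb
    replace ha : a - a' ∈ J.carrier := (Submodule.quotientRel_def _).mp ha
    replace hb : b - b' ∈ J.carrier := (Submodule.quotientRel_def _).mp hb
    refine (Submodule.quotientRel_def _).mpr ?_
    have h : a * b - a' * b' = a * (b - b') + (a - a') * b' := by
      rw [mul_sub, sub_mul]; abel
    rw [h]
    exact J.carrier.add_mem (J.mul_mem_left a hb) (J.mul_mem_right b' ha))⟩

@[simp] theorem ClosedIdeal.mk_mul (a b : B) :
    (Submodule.Quotient.mk (a * b) : B ⧸ J.carrier) =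
      Submodule.Quotient.mk a * Submodule.Quotient.mk b := rfl

end QuotInstances

section QuotRing

variable {B : Type*} [NonUnitalNormedRing B] [NormedSpace ℂ B]
  [SMulCommClass ℂ B B] [IsScalarTower ℂ B B] (J : ClosedIdeal B)

noncomputable instance : NormedAddCommGroup (B ⧸ J.carrier) :=
  have : IsClosed ((J.carrier : Submodule ℂ B) : Set B) := J.isClosed
  Submodule.Quotient.normedAddCommGroup J.carrier

noncomputable instance : NonUnitalNormedRing (B ⧸ J.carrier) :=
  { (inferInstance : NormedAddCommGroup (B ⧸ J.carrier)) with
    mul := (· * ·)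
    mul_assoc := fun q1 q2 q3 => Quotient.inductionOn₃ q1 q2 q3 fun a b c =>
      congrArg Submodule.Quotient.mk (mul_assoc a b c)
    left_distrib := fun q1 q2 q3 => Quotient.inductionOn₃ q1 q2 q3 fun a b c =>
      congrArg Submodule.Quotient.mk (mul_add a b c)
    right_distrib := fun q1 q2 q3 => Quotient.inductionOn₃ q1 q2 q3 fun a b c =>
      congrArg Submodule.Quotient.mk (add_mul a b c)
    zero_mul := fun q => Quotient.inductionOn q fun a =>
      congrArg Submodule.Quotient.mk (zero_mul a)
    mul_zero := fun q => Quotient.inductionOn q fun a =>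
      congrArg Submodule.Quotient.mk (mul_zero a)
    norm_mul_le := fun q1 q2 => by
      have key : ∀ ε : ℝ, 0 < ε → ‖q1 * q2‖ ≤ (‖q1‖ + ε) * (‖q2‖ + ε) := by
        intro ε hε
        obtain ⟨a, rfl, ha⟩ := Submodule.Quotient.norm_mk_lt q1 hε
        obtain ⟨b, rfl, hb⟩ := Submodule.Quotient.norm_mk_lt q2 hε
        calc ‖(Submodule.Quotient.mk a : B ⧸ J.carrier) * Submodule.Quotient.mk b‖
            = ‖(Submodule.Quotient.mk (a * b) : B ⧸ J.carrier)‖ := by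
              rw [ClosedIdeal.mk_mul]
          _ ≤ ‖a * b‖ := Submodule.Quotient.norm_mk_le _ _
          _ ≤ ‖a‖ * ‖b‖ := norm_mul_le a b
          _ ≤ (‖(Submodule.Quotient.mk a : B ⧸ J.carrier)‖ + ε) *
                (‖(Submodule.Quotient.mk b : B ⧸ J.carrier)‖ + ε) := by
              apply mul_le_mul ha.le hb.le (norm_nonneg b)
              positivity
      have cont : Filter.Tendsto (fun ε : ℝ => (‖q1‖ + ε) * (‖q2‖ + ε))
          (nhdsWithin 0 (Set.Ioi 0)) (nhds (‖q1‖ * ‖q2‖)) := by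
        have h0 : Filter.Tendsto (fun ε : ℝ => (‖q1‖ + ε) * (‖q2‖ + ε))
            (nhds 0) (nhds ((‖q1‖ + 0) * (‖q2‖ + 0))) :=
          Continuous.tendsto (by continuity) 0
        simpa using h0.mono_left nhdsWithin_le_nhds
      exact ge_of_tendsto cont
        (Filter.eventually_of_mem self_mem_nhdsWithin fun ε hε => key ε hε) }

noncomputable instance : SMulCommClass ℂ (B ⧸ J.carrier) (B ⧸ J.carrier) :=
  ⟨fun c q1 q2 => Quotient.inductionOn₂ q1 q2 fun a b =>
    congrArg Submodule.Quotient.mk (mul_smul_comm c a b).symm⟩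

noncomputable instance : IsScalarTower ℂ (B ⧸ J.carrier) (B ⧸ J.carrier) :=
  ⟨fun c q1 q2 => Quotient.inductionOn₂ q1 q2 fun a b =>
    congrArg Submodule.Quotient.mk (smul_mul_assoc c a b)⟩

end QuotRing

section Hypo

variable (B : Type*) [NonUnitalNormedRing B] [NormedSpace ℂ B]
  [SMulCommClass ℂ B B] [IsScalarTower ℂ B B]

/-- A Banach algebra is *hypocompact* if every nonzero quotient by a closed
two-sided ideal contains a nonzero compact element. -/
def IsHypocompact : Prop :=
  ∀ J : ClosedIdeal B, J.carrier ≠ ⊤ →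
    ∃ q : B ⧸ J.carrier, q ≠ 0 ∧ IsCompactElement' q

end Hypo

theorem IsCompactOperator.mul_left_mul_right_mul (𝕜 : Type*) {A : Type*}
    [NontriviallyNormedField 𝕜] [NonUnitalSeminormedRing A] [NormedSpace 𝕜 A]
    [IsScalarTower 𝕜 A A] [SMulCommClass 𝕜 A A] {u v : A}
    (h : IsCompactOperator fun x : A => u * x * v) (c d : A) :
    IsCompactOperator fun x : A => u * c * x * (v * d) := by
  have hfactor : (fun x : A => u * c * x * (v * d)) = (ContinuousLinearMap.mul 𝕜 A).flip d ∘
      ((fun x : A => u * x * v) ∘ ContinuousLinearMap.mul 𝕜 A c) := by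
    funext x
    simp only [Function.comp_apply, ContinuousLinearMap.mul_apply',
      ContinuousLinearMap.flip_apply, mul_assoc]
  rw [hfactor]
  exact (h.comp_clm _).clm_comp _

section ClosureSpan

variable {𝕜 E F G : Type*} [NontriviallyNormedField 𝕜]
  [SeminormedAddCommGroup E] [NormedSpace 𝕜 E] [SeminormedAddCommGroup F] [NormedSpace 𝕜 F]
  [SeminormedAddCommGroup G] [NormedSpace 𝕜 G] {K : Submodule 𝕜 G}

theorem Submodule.topologicalClosure_span_le_comap (f : E →L[𝕜] G) (hK : IsClosed (K : Set G))
    {s : Set E} (hs : ∀ x ∈ s, f x ∈ K) :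
    (Submodule.span 𝕜 s).topologicalClosure ≤ K.comap (f : E →ₗ[𝕜] G) :=
  Submodule.topologicalClosure_minimal _ (Submodule.span_le.mpr hs) (hK.preimage f.continuous)

theorem ContinuousLinearMap.apply_apply_mem_of_mem_topologicalClosure_span
    (f : E →L[𝕜] F →L[𝕜] G) (hK : IsClosed (K : Set G)) {s : Set E} {t : Set F}
    (hst : ∀ x ∈ s, ∀ y ∈ t, f x y ∈ K) :
    ∀ x ∈ (Submodule.span 𝕜 s).topologicalClosure,
      ∀ y ∈ (Submodule.span 𝕜 t).topologicalClosure, f x y ∈ K := by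
  intro x hx y hy
  have hsy : ∀ x ∈ s, f.flip y x ∈ K := fun x' hx' =>
    Submodule.topologicalClosure_span_le_comap (f x') hK (hst x' hx') hy
  exact Submodule.topologicalClosure_span_le_comap (f.flip y) hK hsy hx

end ClosureSpan

/-- if `J` is a bicompact closed ideal of a Banach algebra `A`,
then `L_a R_b` is compact for all `a, b` in the closed linear span of `J A`. -/
theorem bicompact_span_mul {A : Type*} [NonUnitalNormedRing A] [NormedSpace ℂ A]
    [SMulCommClass ℂ A A] [IsScalarTower ℂ A A] [CompleteSpace A]
    (J : ClosedIdeal A)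
    (hJ : ∀ u ∈ J.carrier, ∀ v ∈ J.carrier, IsCompactOperator (fun x : A => u * x * v)) :
    ∀ a ∈ (Submodule.span ℂ {x | ∃ j ∈ J.carrier, ∃ c : A, x = j * c}).topologicalClosure,
      ∀ b ∈ (Submodule.span ℂ {x | ∃ j ∈ J.carrier, ∃ c : A, x = j * c}).topologicalClosure,
        IsCompactOperator (fun x : A => a * x * b) := by
  set S : Set A := {x | ∃ j ∈ J.carrier, ∃ c : A, x = j * c}
  have hS : ∀ x ∈ S, ∀ y ∈ S, ContinuousLinearMap.mulLeftRight ℂ A x y ∈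
      compactOperator (RingHom.id ℂ) A A := by
    rintro _ ⟨j, hj, c, rfl⟩ _ ⟨k, hk, d, rfl⟩
    exact (hJ j hj k hk).mul_left_mul_right_mul ℂ c d
  exact (ContinuousLinearMap.mulLeftRight ℂ A).apply_apply_mem_of_mem_topologicalClosure_span
    isClosed_setOfPred_isCompactOperator hS
end

section
/- The quotient A/R_hc(A) of a Banach algebra by its largest hypocompact ideal has no nonzero hypocompact ideals and no nonzero compact elements. -/
/-! If `I` is a hypocompact closed ideal of `A ⧸ R`, its preimage `J` in `A` is an extension
of `I ≅ J ⧸ R` by the hypocompact ideal `R`, hence hypocompact; so `J ≤ R` by maximality and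
`I = 0`. For the extension, a proper closed ideal `L` of `J` either contains `R`, and then
`J ⧸ L` is a quotient of `I`, or misses part of `R`. In the second case hypocompactness of `R`
gives `z ∈ R` whose image in `R ⧸ (L ∩ R)` is nonzero and compact, and then the image in `J ⧸ L`
of `z` or of some `z x z` is nonzero and compact, because `(z x z) y (z x z) = z (x z y z x) z`.

Once `A ⧸ R` has no nonzero hypocompact ideal, it has no nonzero compact element either: the
compact elements span a dense subspace of a closed ideal, and that ideal is hypocompact because
every proper quotient of it contains the nonzero image of a compact element. -/

theorem Topology.IsQuotientMap.exists_continuous_comp_eq {X Y Z : Type*} [TopologicalSpace X]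
    [TopologicalSpace Y] [TopologicalSpace Z] {p : X → Y} (hp : IsQuotientMap p) {g : X → Z}
    (hg : Continuous g) (hgp : Function.FactorsThrough g p) :
    ∃ Φ : Y → Z, Continuous Φ ∧ Φ ∘ p = g := by
  have hΦ : (g ∘ Function.surjInv hp.surjective) ∘ p = g :=
    funext fun x => hgp (Function.surjInv_eq hp.surjective (p x))
  exact ⟨_, hp.continuous_iff.mpr (by rwa [hΦ]), hΦ⟩

section CompactOperator

variable {X Y Z : Type*} [TopologicalSpace X] [Zero X] [TopologicalSpace Y] [Zero Y]
  [TopologicalSpace Z]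

theorem IsCompactOperator.comp_continuous {T : Y → Z} (hT : IsCompactOperator T) {F : X → Y}
    (hF : Continuous F) (hF0 : F 0 = 0) : IsCompactOperator (T ∘ F) := by
  obtain ⟨K, hK, hKT⟩ := hT
  exact ⟨K, hK, hF.continuousAt.preimage_mem_nhds (hF0 ▸ hKT)⟩

theorem IsCompactOperator.of_comp_isOpenQuotientMap {T : Y → Z} {p : X → Y}
    (hp : IsOpenQuotientMap p) (hp0 : p 0 = 0) (h : IsCompactOperator (T ∘ p)) :
    IsCompactOperator T := by
  obtain ⟨K, hK, hKT⟩ := h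
  refine ⟨K, hK, ?_⟩
  simpa [Set.preimage_comp, Set.image_preimage_eq _ hp.surjective, hp0]
    using hp.isOpenMap.image_mem_nhds hKT

end CompactOperator

section CompactElement

variable {B : Type*} [NonUnitalNormedRing B] [NormedSpace ℂ B]
  [SMulCommClass ℂ B B] [IsScalarTower ℂ B B]

theorem IsCompactElement'.mul_left {b : B} (hb : IsCompactElement' b) (x : B) :
    IsCompactElement' (x * b) := by
  have hW : (Wop (x * b) : B → B) =
      ContinuousLinearMap.mul ℂ B x ∘ Wop b ∘ (ContinuousLinearMap.mul ℂ B).flip x := by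
    funext y
    simp [Wop, mul_assoc]
  rw [IsCompactElement', hW]
  exact (hb.comp_clm _).clm_comp _

theorem IsCompactElement'.mul_right {b : B} (hb : IsCompactElement' b) (x : B) :
    IsCompactElement' (b * x) := by
  have hW : (Wop (b * x) : B → B) =
      (ContinuousLinearMap.mul ℂ B).flip x ∘ Wop b ∘ ContinuousLinearMap.mul ℂ B x := by
    funext y
    simp [Wop, mul_assoc]
  rw [IsCompactElement', hW]
  exact (hb.comp_clm _).clm_comp _

end CompactElement

namespace ClosedIdeal

section Maps

variable {B C : Type*} [NonUnitalNormedRing B] [NormedSpace ℂ B]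
  [NonUnitalNormedRing C] [NormedSpace ℂ C]

def comap (f : B →ₙₐ[ℂ] C) (hf : Continuous f) (I : ClosedIdeal C) : ClosedIdeal B where
  carrier := I.carrier.comap (f : B →ₗ[ℂ] C)
  isClosed := I.isClosed.preimage hf
  mul_mem_left x a ha := by
    simpa only [Submodule.mem_comap, LinearMap.coe_coe, map_mul] using I.mul_mem_left (f x) ha
  mul_mem_right x a ha := by
    simpa only [Submodule.mem_comap, LinearMap.coe_coe, map_mul] using I.mul_mem_right (f x) ha

def comapRestrict (f : B →ₙₐ[ℂ] C) (hf : Continuous f) (I : ClosedIdeal C) :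
    (I.comap f hf).carrier →ₙₐ[ℂ] I.carrier where
  toFun x := ⟨f x, x.2⟩
  map_smul' c x := Subtype.ext (map_smul f c (x : B))
  map_zero' := Subtype.ext (map_zero f)
  map_add' x y := Subtype.ext (map_add f (x : B) y)
  map_mul' x y := Subtype.ext (map_mul f (x : B) y)

theorem isOpenQuotientMap_comapRestrict {f : B →ₙₐ[ℂ] C} (hf : IsOpenQuotientMap f)
    (I : ClosedIdeal C) : IsOpenQuotientMap (I.comapRestrict f hf.continuous) :=
  hf.restrictPreimage I.carrier

theorem apply_mem_map_iff {f : B →ₙₐ[ℂ] C} (L : ClosedIdeal B)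
    (hker : ∀ x, f x = 0 → x ∈ L.carrier) {x : B} :
    f x ∈ L.carrier.map (f : B →ₗ[ℂ] C) ↔ x ∈ L.carrier := by
  change (f : B →ₗ[ℂ] C) x ∈ _ ↔ _
  rw [← Submodule.mem_comap, Submodule.comap_map_eq, sup_eq_left.mpr hker]

def map {f : B →ₙₐ[ℂ] C} (hf : IsOpenQuotientMap f) (L : ClosedIdeal B)
    (hker : ∀ x, f x = 0 → x ∈ L.carrier) : ClosedIdeal C where
  carrier := L.carrier.map (f : B →ₗ[ℂ] C)
  isClosed := by
    rw [← hf.isQuotientMap.isClosed_preimage]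
    convert L.isClosed using 1
    ext x
    exact apply_mem_map_iff L hker
  mul_mem_left y c hc := by
    obtain ⟨x, rfl⟩ := hf.surjective y
    obtain ⟨a, ha, rfl⟩ := hc
    exact ⟨x * a, L.mul_mem_left x ha, map_mul f x a⟩
  mul_mem_right y c hc := by
    obtain ⟨x, rfl⟩ := hf.surjective y
    obtain ⟨a, ha, rfl⟩ := hc
    exact ⟨a * x, L.mul_mem_right x ha, map_mul f a x⟩

variable [SMulCommClass ℂ B B] [IsScalarTower ℂ B B]

noncomputable def mkQ (L : ClosedIdeal B) : B →ₙₐ[ℂ] B ⧸ L.carrier :=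
  { L.carrier.mkQ with
    map_zero' := rfl
    map_mul' := mk_mul L }

theorem isOpenQuotientMap_mkQ (L : ClosedIdeal B) : IsOpenQuotientMap L.mkQ :=
  L.carrier.isOpenQuotientMap_mkQ

theorem mkQ_eq_zero {L : ClosedIdeal B} {x : B} : L.mkQ x = 0 ↔ x ∈ L.carrier :=
  Submodule.Quotient.mk_eq_zero _

variable [SMulCommClass ℂ C C] [IsScalarTower ℂ C C]

theorem exists_isCompactElement'_of_ker_le {f : B →ₙₐ[ℂ] C} (hf : IsOpenQuotientMap f)
    (hC : IsHypocompact C) (L : ClosedIdeal B) (hker : ∀ x, f x = 0 → x ∈ L.carrier)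
    (hL : L.carrier ≠ ⊤) : ∃ q : B ⧸ L.carrier, q ≠ 0 ∧ IsCompactElement' q := by
  set L' := map hf L hker
  have hL' : L'.carrier ≠ ⊤ := fun h => hL <| Submodule.eq_top_iff'.mpr fun x =>
    have hx : f x ∈ L'.carrier := h ▸ Submodule.mem_top
    (apply_mem_map_iff L hker).mp hx
  obtain ⟨q, hq0, hq⟩ := hC L' hL'
  set F := L'.mkQ.comp f
  have hF : IsOpenQuotientMap F := L'.isOpenQuotientMap_mkQ.comp hf
  have hFL : ∀ x, F x = 0 ↔ x ∈ L.carrier :=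
    fun x => mkQ_eq_zero.trans (apply_mem_map_iff L hker)
  obtain ⟨g, rfl⟩ := hF.surjective q
  -- `F` and `L.mkQ` both have kernel `L`, so `L.mkQ` factors continuously through `F`.
  obtain ⟨Φ, hΦ, hΦF⟩ := hF.isQuotientMap.exists_continuous_comp_eq
    L.isOpenQuotientMap_mkQ.continuous fun a b (hab : F a = F b) => show L.mkQ a = L.mkQ b by
      rw [← sub_eq_zero, ← map_sub, hFL] at hab
      rwa [← sub_eq_zero, ← map_sub, mkQ_eq_zero]
  refine ⟨L.mkQ g, mkQ_eq_zero.not.mpr ((hFL g).not.mp hq0), ?_⟩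
  have hW : Wop (L.mkQ g) ∘ L.mkQ = Φ ∘ Wop (F g) ∘ F := by
    funext y
    simp only [Function.comp_apply, Wop, LinearMap.coe_mk, AddHom.coe_mk, ← map_mul]
    rw [← Function.comp_apply (f := Φ), hΦF]
  exact .of_comp_isOpenQuotientMap L.isOpenQuotientMap_mkQ (map_zero _)
    (hW ▸ (hq.comp_continuous hF.continuous (map_zero F)).continuous_comp hΦ)

end Maps

section ClosureSpan

variable {B : Type*} [NonUnitalNormedRing B] [NormedSpace ℂ B]
  [SMulCommClass ℂ B B] [IsScalarTower ℂ B B]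

theorem isCompactElement'_mkQ_of_mem (I : ClosedIdeal B) (L : ClosedIdeal I.carrier) {g : B}
    (hg : IsCompactElement' g) (hgI : g ∈ I.carrier) :
    IsCompactElement' (L.mkQ ⟨g, hgI⟩) := by
  have hmem : ∀ y : I.carrier, g * y * g ∈ I.carrier :=
    fun y => I.mul_mem_right g (I.mul_mem_right _ hgI)
  have hT : IsCompactOperator (Set.codRestrict (Wop g ∘ Subtype.val) I.carrier hmem) :=
    (hg.comp_clm I.carrier.subtypeL).codRestrict hmem I.isClosed
  have hW : Wop (L.mkQ ⟨g, hgI⟩) ∘ L.mkQ =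
      L.mkQ ∘ Set.codRestrict (Wop g ∘ Subtype.val) I.carrier hmem := rfl
  exact .of_comp_isOpenQuotientMap L.isOpenQuotientMap_mkQ (map_zero _)
    (hW ▸ hT.continuous_comp L.isOpenQuotientMap_mkQ.continuous)

def closureSpan (S : Set B) (hl : ∀ x, ∀ s ∈ S, x * s ∈ S)
    (hr : ∀ x, ∀ s ∈ S, s * x ∈ S) : ClosedIdeal B where
  carrier := (Submodule.span ℂ S).topologicalClosure
  isClosed := Submodule.isClosed_topologicalClosure _
  mul_mem_left x a ha := by
    have hspan : Submodule.span ℂ S ≤ (Submodule.span ℂ S).comap (LinearMap.mulLeft ℂ x) :=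
      Submodule.span_le.mpr fun s hs => Submodule.subset_span (hl x s hs)
    exact map_mem_closure (continuous_const_mul x) ha fun w hw => hspan hw
  mul_mem_right x a ha := by
    have hspan : Submodule.span ℂ S ≤ (Submodule.span ℂ S).comap (LinearMap.mulRight ℂ x) :=
      Submodule.span_le.mpr fun s hs => Submodule.subset_span (hr x s hs)
    exact map_mem_closure (f := (· * x)) (continuous_mul_const x) ha fun w hw => hspan hw

theorem subset_closureSpan {S : Set B} {hl hr} : S ⊆ (closureSpan S hl hr).carrier :=
  fun _ hs => Submodule.le_topologicalClosure _ (Submodule.subset_span hs)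

theorem isHypocompact_closureSpan {S : Set B} {hl hr} (hS : ∀ s ∈ S, IsCompactElement' s) :
    IsHypocompact (closureSpan S hl hr).carrier := by
  set I := closureSpan S hl hr
  intro L hL
  by_cases hSL : ∃ s, ∃ hs : s ∈ S, (⟨s, subset_closureSpan hs⟩ : I.carrier) ∉ L.carrier
  · obtain ⟨s, hs, hsL⟩ := hSL
    exact ⟨L.mkQ ⟨s, subset_closureSpan hs⟩, mkQ_eq_zero.not.mpr hsL,
      isCompactElement'_mkQ_of_mem I L (hS s hs) _⟩
  · simp only [not_exists, not_not] at hSL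
    refine absurd ?_ hL
    let L' := L.carrier.map I.carrier.subtype
    have hL' : IsClosed (L' : Set B) :=
      I.isClosed.isClosedEmbedding_subtypeVal.isClosedMap _ L.isClosed
    have hIL' : I.carrier ≤ L' := Submodule.topologicalClosure_minimal _
      (Submodule.span_le.mpr fun s hs => ⟨_, hSL s hs, rfl⟩) hL'
    rw [Submodule.eq_top_iff']
    intro y
    obtain ⟨l, hl, hly⟩ := hIL' y.2
    rwa [← Subtype.ext hly]

end ClosureSpan

section Extension

variable {A : Type*} [NonUnitalNormedRing A] [NormedSpace ℂ A]
  {R J : ClosedIdeal A} (hRJ : R.carrier ≤ J.carrier)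

def inclusion : R.carrier →ₙₐ[ℂ] J.carrier :=
  { Submodule.inclusion hRJ with
    map_zero' := rfl
    map_mul' := fun _ _ => rfl }

theorem continuous_inclusion : Continuous (inclusion hRJ) :=
  continuous_subtype_val.subtype_mk _

variable [SMulCommClass ℂ A A] [IsScalarTower ℂ A A]

theorem isCompactElement'_mkQ_mul_mul (L : ClosedIdeal J.carrier) {z : R.carrier}
    (hz : IsCompactElement' ((L.comap (inclusion hRJ) (continuous_inclusion hRJ)).mkQ z))
    (x : J.carrier) : IsCompactElement' (L.mkQ (inclusion hRJ z * x * inclusion hRJ z)) := by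
  set ι := inclusion hRJ
  set M := L.comap ι (continuous_inclusion hRJ)
  have hxz : (x : A) * z ∈ R.carrier := R.mul_mem_left _ z.2
  let ψ : J.carrier → R.carrier := fun y =>
    ⟨x * z * y * z * x, R.mul_mem_right _ (R.mul_mem_right _ (R.mul_mem_right _ hxz))⟩
  have hψ : Continuous ψ := by
    refine Continuous.subtype_mk ?_ _
    fun_prop
  have hψ0 : ψ 0 = 0 := Subtype.ext (by simp [ψ])
  obtain ⟨S, hS, hSM⟩ := M.isOpenQuotientMap_mkQ.isQuotientMap.exists_continuous_comp_eq
    (L.isOpenQuotientMap_mkQ.continuous.comp (continuous_inclusion hRJ))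
    fun a b (hab : M.mkQ a = M.mkQ b) => show L.mkQ (ι a) = L.mkQ (ι b) by
      rw [← sub_eq_zero, ← map_sub, mkQ_eq_zero] at hab ⊢
      rwa [← map_sub]
  have hW : Wop (L.mkQ (ι z * x * ι z)) ∘ L.mkQ = S ∘ Wop (M.mkQ z) ∘ (M.mkQ ∘ ψ) := by
    funext y
    simp only [Function.comp_apply, Wop, LinearMap.coe_mk, AddHom.coe_mk, ← map_mul]
    rw [← Function.comp_apply (f := S), hSM, Function.comp_apply]
    congr 1
    ext
    simp [ι, ψ, inclusion, mul_assoc]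
  have hT := hz.comp_continuous (M.isOpenQuotientMap_mkQ.continuous.comp hψ) (by simp [hψ0])
  exact .of_comp_isOpenQuotientMap L.isOpenQuotientMap_mkQ (map_zero _)
    (hW ▸ hT.continuous_comp hS)

theorem exists_isCompactElement'_of_inclusion_notMem (hR : IsHypocompact R.carrier)
    (L : ClosedIdeal J.carrier) {r : R.carrier} (hr : inclusion hRJ r ∉ L.carrier) :
    ∃ q : J.carrier ⧸ L.carrier, q ≠ 0 ∧ IsCompactElement' q := by
  set M := L.comap (inclusion hRJ) (continuous_inclusion hRJ)
  have hM : M.carrier ≠ ⊤ := fun h => hr (h ▸ Submodule.mem_top : r ∈ M.carrier)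
  obtain ⟨zq, hz0, hz⟩ := hR M hM
  obtain ⟨z, rfl⟩ := M.isOpenQuotientMap_mkQ.surjective zq
  by_cases hzJz : ∃ x, inclusion hRJ z * x * inclusion hRJ z ∉ L.carrier
  · obtain ⟨x, hx⟩ := hzJz
    exact ⟨_, mkQ_eq_zero.not.mpr hx, isCompactElement'_mkQ_mul_mul hRJ L hz x⟩
  · simp only [not_exists, not_not] at hzJz
    have hzL : inclusion hRJ z ∉ L.carrier := (mkQ_eq_zero (L := M)).not.mp hz0
    refine ⟨L.mkQ (inclusion hRJ z), mkQ_eq_zero.not.mpr hzL, ?_⟩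
    have hW : (Wop (L.mkQ (inclusion hRJ z)) : _ → _) = 0 := by
      funext q
      obtain ⟨y, rfl⟩ := L.isOpenQuotientMap_mkQ.surjective q
      exact mkQ_eq_zero.mpr (hzJz y)
    rw [IsCompactElement', hW]
    exact isCompactOperator_zero

end Extension

theorem isHypocompact_of_isOpenQuotientMap {A : Type*} [NonUnitalNormedRing A]
    [NormedSpace ℂ A] [SMulCommClass ℂ A A] [IsScalarTower ℂ A A] {R J : ClosedIdeal A}
    (hRJ : R.carrier ≤ J.carrier) (hR : IsHypocompact R.carrier) {C : Type*}
    [NonUnitalNormedRing C] [NormedSpace ℂ C] [SMulCommClass ℂ C C] [IsScalarTower ℂ C C]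
    {f : J.carrier →ₙₐ[ℂ] C} (hf : IsOpenQuotientMap f)
    (hker : ∀ x, f x = 0 → (x : A) ∈ R.carrier) (hC : IsHypocompact C) :
    IsHypocompact J.carrier := by
  intro L hL
  by_cases hRL : ∃ r, inclusion hRJ r ∉ L.carrier
  · obtain ⟨r, hr⟩ := hRL
    exact exists_isCompactElement'_of_inclusion_notMem hRJ hR L hr
  · simp only [not_exists, not_not] at hRL
    exact exists_isCompactElement'_of_ker_le hf hC L (fun x hx => hRL ⟨x, hker x hx⟩) hL

theorem eq_bot_of_isHypocompact {A : Type*} [NonUnitalNormedRing A] [NormedSpace ℂ A]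
    [SMulCommClass ℂ A A] [IsScalarTower ℂ A A] (R : ClosedIdeal A)
    (hR : IsHypocompact R.carrier)
    (hmax : ∀ I : ClosedIdeal A, IsHypocompact I.carrier → I.carrier ≤ R.carrier)
    (I : ClosedIdeal (A ⧸ R.carrier)) (hI : IsHypocompact I.carrier) : I.carrier = ⊥ := by
  set J := I.comap R.mkQ R.isOpenQuotientMap_mkQ.continuous
  have hRJ : R.carrier ≤ J.carrier := fun r hr => by
    change R.mkQ r ∈ I.carrier
    rw [mkQ_eq_zero.mpr hr]
    exact I.carrier.zero_mem
  have hJ : IsHypocompact J.carrier := isHypocompact_of_isOpenQuotientMap hRJ hR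
    (isOpenQuotientMap_comapRestrict R.isOpenQuotientMap_mkQ I)
    (fun x hx => mkQ_eq_zero.mp (congrArg Subtype.val hx)) hI
  rw [eq_bot_iff]
  intro v hv
  obtain ⟨a, rfl⟩ := R.isOpenQuotientMap_mkQ.surjective v
  exact (Submodule.mem_bot ℂ).mpr (mkQ_eq_zero.mpr (hmax J hJ hv))

end ClosedIdeal

theorem eq_zero_of_isCompactElement' {B : Type*} [NonUnitalNormedRing B] [NormedSpace ℂ B]
    [SMulCommClass ℂ B B] [IsScalarTower ℂ B B]
    (hbot : ∀ I : ClosedIdeal B, IsHypocompact I.carrier → I.carrier = ⊥) {q : B}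
    (hq : IsCompactElement' q) : q = 0 := by
  let I := ClosedIdeal.closureSpan {b : B | IsCompactElement' b}
    (fun x _ hb => hb.mul_left x) (fun x _ hb => hb.mul_right x)
  have hqI : q ∈ I.carrier := ClosedIdeal.subset_closureSpan hq
  simpa [hbot I (ClosedIdeal.isHypocompact_closureSpan fun _ hs => hs)] using hqI

theorem quotient_largest_hypocompact_general {A : Type*} [NonUnitalNormedRing A]
    [NormedSpace ℂ A] [SMulCommClass ℂ A A] [IsScalarTower ℂ A A]
    (R : ClosedIdeal A)
    (hR : IsHypocompact R.carrier ∧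
      ∀ I : ClosedIdeal A, IsHypocompact I.carrier → I.carrier ≤ R.carrier) :
    (∀ I : ClosedIdeal (A ⧸ R.carrier), IsHypocompact I.carrier → I.carrier = ⊥) ∧
    (∀ q : A ⧸ R.carrier, IsCompactElement' q → q = 0) := by
  have hbot := R.eq_bot_of_isHypocompact hR.1 hR.2
  exact ⟨hbot, fun _ => eq_zero_of_isCompactElement' hbot⟩

/-- the quotient of a Banach algebra by its largest hypocompact
ideal has no nonzero hypocompact closed ideals and no nonzero compact
elements. -/
theorem quotient_largest_hypocompact {A : Type*} [NonUnitalNormedRing A]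
    [NormedSpace ℂ A] [SMulCommClass ℂ A A] [IsScalarTower ℂ A A] [CompleteSpace A]
    (R : ClosedIdeal A)
    (hR : IsHypocompact R.carrier ∧
      ∀ I : ClosedIdeal A, IsHypocompact I.carrier → I.carrier ≤ R.carrier) :
    (∀ I : ClosedIdeal (A ⧸ R.carrier), IsHypocompact I.carrier → I.carrier = ⊥) ∧
    (∀ q : A ⧸ R.carrier, IsCompactElement' q → q = 0) :=
  quotient_largest_hypocompact_general R hR
end
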